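/- Let α > 0 and 0 < β < α. Then x = β/(α(α − β)) is a strictly positive solution of the equation K_{1/2}(αx)/K_{3/2}(αx) = β/α; that is, the mode of the variance-gamma distribution VG₂(λ, α, β, 0) with λ = 2 equals β/(α(α − β)). -/

import Mathlib

/-! The ratio is computed from the recurrence `x (K_{ν+1}(x) - K_{ν-1}(x)) = 2ν K_ν(x)`, obtained by
integrating the derivative of `t ↦ exp (-x cosh t) sinh (ν t)` over `(0, ∞)`: it vanishes at `0`, and
at `∞` because `x cosh t` outgrows every linear function of `t`. For `ν = 1/2` and `K_{-1/2} = K_{1/2}`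
this gives `x K_{3/2}(x) = (x + 1) K_{1/2}(x)`, so the ratio equals `x / (x + 1)`, which is `β / α` at
`x = β / (α - β)`. -/

open Real MeasureTheory Set Filter Asymptotics Topology

noncomputable def besselK (ν x : ℝ) : ℝ :=
  ∫ t in Set.Ioi (0:ℝ), Real.exp (-x * Real.cosh t) * Real.cosh (ν * t)

lemma sq_div_four_le_cosh {t : ℝ} (ht : 0 ≤ t) : t ^ 2 / 4 ≤ cosh t := by
  have := quadratic_le_exp_of_nonneg ht
  have := exp_pos (-t)
  rw [cosh_eq]
  nlinarith

lemma tendsto_mul_cosh_sub_mul_atTop {x : ℝ} (hx : 0 < x) (c : ℝ) :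
    Tendsto (fun t => x * cosh t - c * t) atTop atTop := by
  have hquad : Tendsto (fun t => t * (x / 4 * t - c)) atTop atTop :=
    tendsto_id.atTop_mul_atTop₀ (tendsto_atTop_add_const_right _ _
      (tendsto_id.const_mul_atTop (by positivity)))
  refine tendsto_atTop_mono' _ ?_ hquad
  filter_upwards [eventually_ge_atTop 0] with t ht
  nlinarith [sq_div_four_le_cosh ht]

lemma isBigO_cosh_mul (ν : ℝ) : (fun t => cosh (ν * t)) =O[atTop] fun t => exp (|ν| * t) := by
  refine IsBigO.of_bound 1 ?_
  filter_upwards [eventually_ge_atTop 0] with t ht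
  have h : |ν * t| = |ν| * t := by rw [abs_mul, abs_of_nonneg ht]
  rw [one_mul, norm_of_nonneg (cosh_pos _).le, norm_of_nonneg (exp_pos _).le, ← cosh_abs, h]
  linarith [cosh_add_sinh (|ν| * t), sinh_nonneg_iff.2 (by positivity : 0 ≤ |ν| * t)]

lemma isBigO_sinh_mul (ν : ℝ) : (fun t => sinh (ν * t)) =O[atTop] fun t => exp (|ν| * t) := by
  refine IsBigO.of_bound 1 ?_
  filter_upwards [eventually_ge_atTop 0] with t ht
  have h : |ν * t| = |ν| * t := by rw [abs_mul, abs_of_nonneg ht]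
  rw [one_mul, norm_eq_abs, abs_sinh, norm_of_nonneg (exp_pos _).le, h]
  linarith [cosh_add_sinh (|ν| * t), cosh_pos (|ν| * t)]

lemma isLittleO_exp_neg_mul_cosh_mul {x a : ℝ} (hx : 0 < x) {g : ℝ → ℝ}
    (hg : g =O[atTop] fun t => exp (a * t)) :
    (fun t => exp (-x * cosh t) * g t) =o[atTop] fun t => exp (-1 * t) := by
  have hdecay : (fun t => exp (-x * cosh t)) =o[atTop] fun t => exp (-(a + 1) * t) := by
    rw [isLittleO_exp_comp_exp_comp]
    convert tendsto_mul_cosh_sub_mul_atTop hx (a + 1) using 2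
    ring
  refine (hdecay.mul_isBigO hg).congr_right fun t => ?_
  rw [← exp_add]
  ring_nf

lemma integrableOn_exp_neg_mul_cosh_mul_cosh (ν : ℝ) {x : ℝ} (hx : 0 < x) :
    IntegrableOn (fun t => exp (-x * cosh t) * cosh (ν * t)) (Ioi 0) :=
  integrable_of_isBigO_exp_neg one_pos (by fun_prop)
    (isLittleO_exp_neg_mul_cosh_mul hx (isBigO_cosh_mul ν)).isBigO

lemma besselK_neg (ν x : ℝ) : besselK (-ν) x = besselK ν x := by
  simp only [besselK, neg_mul, cosh_neg]

lemma besselK_pos (ν : ℝ) {x : ℝ} (hx : 0 < x) : 0 < besselK ν x := by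
  have hpos (t : ℝ) : 0 < exp (-x * cosh t) * cosh (ν * t) := by positivity
  rw [besselK, setIntegral_pos_iff_support_of_nonneg_ae (ae_of_all _ fun t => (hpos t).le)
    (integrableOn_exp_neg_mul_cosh_mul_cosh ν hx), Function.support_eq_univ fun t => (hpos t).ne',
    univ_inter]
  simp

lemma mul_besselK_add_one_sub_besselK_sub_one (ν : ℝ) {x : ℝ} (hx : 0 < x) :
    x * (besselK (ν + 1) x - besselK (ν - 1) x) = 2 * ν * besselK ν x := by
  have hcur := integrableOn_exp_neg_mul_cosh_mul_cosh ν hx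
  have hup := integrableOn_exp_neg_mul_cosh_mul_cosh (ν + 1) hx
  have hdown := integrableOn_exp_neg_mul_cosh_mul_cosh (ν - 1) hx
  set F : ℝ → ℝ := fun t => exp (-x * cosh t) * sinh (ν * t)
  set F' : ℝ → ℝ := fun t => ν * (exp (-x * cosh t) * cosh (ν * t))
      - x / 2 * (exp (-x * cosh t) * cosh ((ν + 1) * t))
      + x / 2 * (exp (-x * cosh t) * cosh ((ν - 1) * t)) with hF'
  -- `2 sinh t sinh (ν t) = cosh ((ν + 1) t) - cosh ((ν - 1) t)`
  have hderiv (t : ℝ) : HasDerivAt F (F' t) t := by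
    have := (((hasDerivAt_cosh t).const_mul (-x)).exp).mul ((hasDerivAt_id t).const_mul ν).sinh
    refine this.congr_deriv ?_
    simp only [hF', id, add_mul, sub_mul, one_mul, cosh_add, cosh_sub]
    ring
  have hint : IntegrableOn F' (Ioi 0) :=
    ((hcur.const_mul ν).sub (hup.const_mul _)).add (hdown.const_mul _)
  have hlim : Tendsto F atTop (𝓝 0) :=
    (isLittleO_exp_neg_mul_cosh_mul hx (isBigO_sinh_mul ν)).isBigO.trans_tendsto
      (tendsto_exp_atBot.comp (tendsto_id.const_mul_atTop_of_neg neg_one_lt_zero))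
  have hFTC := integral_Ioi_of_hasDerivAt_of_tendsto (hderiv 0).continuousAt.continuousWithinAt
    (fun t _ => hderiv t) hint hlim
  have hsplit : ∫ t in Ioi 0, F' t
      = ν * besselK ν x - x / 2 * besselK (ν + 1) x + x / 2 * besselK (ν - 1) x := by
    rw [integral_add _ (hdown.const_mul _), integral_sub (hcur.const_mul ν) (hup.const_mul _),
      integral_const_mul, integral_const_mul, integral_const_mul]
    · rfl
    · exact (hcur.const_mul ν).sub (hup.const_mul _)
  simp only [hsplit, F, cosh_zero, mul_zero, sinh_zero, sub_zero] at hFTC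
  linarith

lemma besselK_one_half_div_besselK_three_half {x : ℝ} (hx : 0 < x) :
    besselK (1 / 2) x / besselK (3 / 2) x = x / (x + 1) := by
  have hrec := mul_besselK_add_one_sub_besselK_sub_one (1 / 2) hx
  rw [show (1 / 2 : ℝ) - 1 = -(1 / 2) by norm_num, besselK_neg] at hrec
  rw [div_eq_div_iff (besselK_pos _ hx).ne' (by positivity)]
  norm_num at hrec
  linarith

theorem stmt_12 (α β : ℝ) (hα : 0 < α) (hβ : 0 < β) (hβα : β < α) :
    0 < β / (α * (α - β)) ∧
    besselK (1 / 2) (α * (β / (α * (α - β)))) /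
      besselK (3 / 2) (α * (β / (α * (α - β)))) = β / α := by
  have hαβ : 0 < α - β := sub_pos.2 hβα
  refine ⟨by positivity, ?_⟩
  have hx : α * (β / (α * (α - β))) = β / (α - β) := by field_simp
  rw [hx, besselK_one_half_div_besselK_three_half (by positivity)]
  field_simp
  ring
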